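/- Let (D, Z) be a pair of random variables where D takes values in {0,1} with P(D = 1) = π ∈ (0,1) and Z has a continuous distribution function F_Z. Let C be a copula of (D, Z). Then the default integral function satisfies G_{D,Z}(t) = t − C(1 − π, t) for all t ∈ [0,1]. -/

import Mathlib

open MeasureTheory ProbabilityTheory Set

noncomputable section

variable {Ω : Type*} [MeasurableSpace Ω]

/-- The measure `P` is atomless: every non-null measurable set contains a measurable
subset of strictly smaller positive measure. -/
def MeasureAtomless (P : Measure Ω) : Prop :=
  ∀ s : Set Ω, MeasurableSet s → P s ≠ 0 →
    ∃ t ⊆ s, MeasurableSet t ∧ 0 < P t ∧ P t < P s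

/-- Distribution function `F_Z` of a real random variable `Z` under `P`. -/
def distFun (P : Measure Ω) (Z : Ω → ℝ) (z : ℝ) : ℝ :=
  (P {ω | Z ω ≤ z}).toReal

/-- Generalized inverse `F⁻¹(t) = inf {x | t ≤ F x}`. -/
def qinv (F : ℝ → ℝ) (t : ℝ) : ℝ :=
  sInf {x : ℝ | t ≤ F x}

/-- Bernoulli mixture model `(D₁,…,D_N, Z)` with default probabilities `π` and
(fixed versions of) conditional default probability functions `p n`:
each `Dₙ` is `{0,1}`-valued with `P(Dₙ = 1) = πₙ`, `pₙ` is a version of the conditional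
probability `P(Dₙ = 1 | Z = ·)`, and `D₁,…,D_N` are conditionally independent given `Z`. -/
structure IsBMM (P : Measure Ω) {N : ℕ} (D : Fin N → Ω → ℝ) (Z : Ω → ℝ)
    (π : Fin N → ℝ) (p : Fin N → ℝ → ℝ) : Prop where
  measD : ∀ n, Measurable (D n)
  measZ : Measurable Z
  measp : ∀ n, Measurable (p n)
  values : ∀ n ω, D n ω = 0 ∨ D n ω = 1
  pi_mem : ∀ n, π n ∈ Icc (0:ℝ) 1
  prob : ∀ n, P {ω | D n ω = 1} = ENNReal.ofReal (π n)
  p_mem : ∀ n z, p n z ∈ Icc (0:ℝ) 1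
  condVersion : ∀ n (B : Set ℝ), MeasurableSet B →
    P ({ω | D n ω = 1} ∩ Z ⁻¹' B) = ENNReal.ofReal (∫ z in B, p n z ∂(P.map Z))
  condIndep : ∀ (d : Fin N → Bool) (B : Set ℝ), MeasurableSet B →
    P ((⋂ n, {ω | D n ω = (if d n then (1:ℝ) else 0)}) ∩ Z ⁻¹' B)
      = ENNReal.ofReal (∫ z in B, ∏ n, (if d n then p n z else 1 - p n z) ∂(P.map Z))

/-- Stochastically increasing Bernoulli mixture model: a BMM in which every
conditional default probability function `pₙ` is increasing. -/
structure IsSIBMM (P : Measure Ω) {N : ℕ} (D : Fin N → Ω → ℝ) (Z : Ω → ℝ)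
    (π : Fin N → ℝ) (p : Fin N → ℝ → ℝ) extends IsBMM P D Z π p : Prop where
  mono : ∀ n, Monotone (p n)

/-- The default integral function `G_{D,Z}(s) = ∫_0^s p(F_Z^{-1}(t)) dt`. -/
def defaultIntegral (P : Measure Ω) (Z : Ω → ℝ) (p : ℝ → ℝ) (s : ℝ) : ℝ :=
  ∫ t in (0:ℝ)..s, p (qinv (distFun P Z) t)

/-- Convex order of (nonnegative, integrable) random variables: `E[φ(X)] ≤ E[φ(Y)]`
for every convex `φ : [0,∞) → ℝ` such that both expectations exist. -/
def ConvexOrder (P : Measure Ω) (X Y : Ω → ℝ) : Prop :=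
  ∀ φ : ℝ → ℝ, ConvexOn ℝ (Ici (0:ℝ)) φ →
    Integrable (fun ω => φ (X ω)) P → Integrable (fun ω => φ (Y ω)) P →
    ∫ ω, φ (X ω) ∂P ≤ ∫ ω, φ (Y ω) ∂P

/-- `X₁,…,X_N` are conditionally independent given `Y`: there are (versions of the)
conditional distribution functions `qₙ(x, ·)` of `Xₙ` given `Y` whose product is a version
of the conditional joint distribution function. -/
def CondIndepGiven (P : Measure Ω) {N : ℕ} (X : Fin N → Ω → ℝ) (Y : Ω → ℝ) : Prop :=
  ∃ q : Fin N → ℝ → ℝ → ℝ,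
    (∀ n x, Measurable (q n x)) ∧
    (∀ n x y, q n x y ∈ Icc (0:ℝ) 1) ∧
    (∀ n (x : ℝ) (B : Set ℝ), MeasurableSet B →
      P ({ω | X n ω ≤ x} ∩ Y ⁻¹' B) = ENNReal.ofReal (∫ y in B, q n x y ∂(P.map Y))) ∧
    (∀ (x : Fin N → ℝ) (B : Set ℝ), MeasurableSet B →
      P ((⋂ n, {ω | X n ω ≤ x n}) ∩ Y ⁻¹' B)
        = ENNReal.ofReal (∫ y in B, ∏ n, q n (x n) y ∂(P.map Y)))

/-- Bivariate copula: 2-increasing with the usual boundary conditions. -/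
def IsCopula (C : ℝ → ℝ → ℝ) : Prop :=
  (∀ u ∈ Icc (0:ℝ) 1, C u 0 = 0 ∧ C u 1 = u) ∧
  (∀ v ∈ Icc (0:ℝ) 1, C 0 v = 0 ∧ C 1 v = v) ∧
  (∀ u₁ u₂ v₁ v₂ : ℝ, u₁ ∈ Icc (0:ℝ) 1 → u₂ ∈ Icc (0:ℝ) 1 →
    v₁ ∈ Icc (0:ℝ) 1 → v₂ ∈ Icc (0:ℝ) 1 → u₁ ≤ u₂ → v₁ ≤ v₂ →
    0 ≤ C u₂ v₂ - C u₁ v₂ - C u₂ v₁ + C u₁ v₁)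

/-- A copula is stochastically increasing (SI) iff `v ↦ C(u,v)` is concave for every `u`. -/
def IsSI (C : ℝ → ℝ → ℝ) : Prop :=
  ∀ u ∈ Icc (0:ℝ) 1, ConcaveOn ℝ (Icc (0:ℝ) 1) (fun v => C u v)

/-- Partial derivative `∂₂C(u,v)` of a copula w.r.t. its second argument
(the conditional distribution function `C(u|v)`). -/
def copDeriv₂ (C : ℝ → ℝ → ℝ) (u v : ℝ) : ℝ := deriv (fun w => C u w) v

/-- Generalized inverse `C^{-1}(t|v) = inf {u ∈ [0,1] | ∂₂C(u,v) ≥ t}`. -/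
def condInv (C : ℝ → ℝ → ℝ) (t v : ℝ) : ℝ :=
  sInf {u : ℝ | u ∈ Icc (0:ℝ) 1 ∧ t ≤ copDeriv₂ C u v}

/-- Survival copula `Ĉ(u,v) = u + v − 1 + C(1−u, 1−v)`. -/
def survCop (C : ℝ → ℝ → ℝ) (u v : ℝ) : ℝ :=
  u + v - 1 + C (1 - u) (1 - v)

/-- `U` is uniformly distributed on `(0,1)` under `P`. -/
def IsUniform01 (P : Measure Ω) (U : Ω → ℝ) : Prop :=
  ∀ x ∈ Icc (0:ℝ) 1, P {ω | U ω ≤ x} = ENNReal.ofReal x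

/-- The Clayton copula with parameter `θ > 0`. -/
def clayton (θ : ℝ) (u v : ℝ) : ℝ :=
  if u = 0 ∨ v = 0 then 0
  else (u ^ (-θ) + v ^ (-θ) - 1) ^ (-1 / θ)

/-- `g` is the increasing rearrangement of `f` on `(0,1)`. -/
def IsIncreasingRearrangement (f g : ℝ → ℝ) : Prop :=
  MonotoneOn g (Ioo (0:ℝ) 1) ∧
  (∀ x ∈ Ioo (0:ℝ) 1, (∫ t in x..(1:ℝ), f t) ≤ ∫ t in x..(1:ℝ), g t) ∧
  (∫ t in (0:ℝ)..(1:ℝ), f t) = ∫ t in (0:ℝ)..(1:ℝ), g t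

end

/-! Under `volume` on `(0,1)` the quantile function `F_Z⁻¹` has law `P_Z`, because
`F_Z⁻¹(t) ≤ z ↔ t ≤ F_Z(z)`; hence `G(F_Z(z)) = ∫_{Z ≤ z} p dP_Z = P(D = 1, Z ≤ z)`. Since
`P(D = 0, Z ≤ z) = C(F_D(0), F_Z(z)) = C(1 - π, F_Z(z))` and the two probabilities add up to
`F_Z(z)`, we get `G(t) = t - C(1 - π, t)` for `t = F_Z(z)`. Continuity of `F_Z` makes every
`t ∈ (0,1)` such a value; at `t = 0, 1` the identity is the boundary behaviour of `C` together
with `∫ p dP_Z = π`. -/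

open Filter Topology

theorem Iic_inter_Ioo_zero_one_ae_eq {c : ℝ} (hc : c ≤ 1) :
    (Iic c ∩ Ioo 0 1 : Set ℝ) =ᵐ[volume] Ioo 0 c := by
  have hIoo : Iio c ∩ Ioo 0 1 = Ioo (0 : ℝ) c := by
    ext x
    simp only [mem_inter_iff, mem_Ioo, mem_Iio]
    exact ⟨fun h => ⟨h.2.1, h.1⟩, fun h => ⟨h.2, h.1, h.2.trans_le hc⟩⟩
  rw [← hIoo]
  exact Iio_ae_eq_Iic.symm.inter (EventuallyEq.refl _ _)

section Quantile

variable (μ : Measure ℝ)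

theorem qinv_cdf_le_iff {t : ℝ} (ht : t ∈ Ioo 0 1) (z : ℝ) :
    qinv (cdf μ) t ≤ z ↔ t ≤ cdf μ z := by
  set S := {x : ℝ | t ≤ cdf μ x}
  have hbdd : BddBelow S := by
    obtain ⟨x₀, hx₀⟩ := ((tendsto_cdf_atBot μ).eventually (eventually_lt_nhds ht.1)).exists
    exact ⟨x₀, fun x hx => not_lt.1 fun hlt => (hx.trans (monotone_cdf μ hlt.le)).not_gt hx₀⟩
  have hne : S.Nonempty := ((tendsto_cdf_atTop μ).eventually (eventually_ge_nhds ht.2)).exists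
  refine ⟨fun h => ?_, fun h => csInf_le hbdd h⟩
  -- `S` is an up-set, so right-continuity of the cdf puts its infimum in `S`.
  have hmem : t ≤ cdf μ (sInf S) := by
    refine ge_of_tendsto (((cdf μ).right_continuous _).mono Ioi_subset_Ici_self) ?_
    filter_upwards [self_mem_nhdsWithin] with x hx
    obtain ⟨s, hs, hsx⟩ := exists_lt_of_csInf_lt hne hx
    exact hs.trans (monotone_cdf μ hsx.le)
  exact hmem.trans (monotone_cdf μ h)

theorem monotoneOn_qinv_cdf : MonotoneOn (qinv (cdf μ)) (Ioo 0 1) := fun _ hs _ ht hst =>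
  (qinv_cdf_le_iff μ hs _).2 <| hst.trans <| (qinv_cdf_le_iff μ ht _).1 le_rfl

theorem aemeasurable_qinv_cdf : AEMeasurable (qinv (cdf μ)) (volume.restrict (Ioo 0 1)) :=
  aemeasurable_restrict_of_monotoneOn measurableSet_Ioo (monotoneOn_qinv_cdf μ)

theorem map_qinv_cdf [IsProbabilityMeasure μ] :
    (volume.restrict (Ioo 0 1)).map (qinv (cdf μ)) = μ := by
  refine Measure.ext_of_Iic _ _ fun z => ?_
  have hpre : qinv (cdf μ) ⁻¹' Iic z ∩ Ioo 0 1 = Iic (cdf μ z) ∩ Ioo 0 1 := by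
    ext t
    simp only [mem_inter_iff, mem_preimage, mem_Iic]
    exact and_congr_left fun ht => qinv_cdf_le_iff μ ht z
  rw [Measure.map_apply_of_aemeasurable (aemeasurable_qinv_cdf μ) measurableSet_Iic,
    Measure.restrict_apply' measurableSet_Ioo, hpre,
    measure_congr (Iic_inter_Ioo_zero_one_ae_eq (cdf_le_one μ z)), Real.volume_Ioo, sub_zero,
    ofReal_cdf]

theorem integral_comp_qinv_cdf [IsProbabilityMeasure μ] {f : ℝ → ℝ}
    (hf : AEStronglyMeasurable f μ) :
    ∫ t in Ioo 0 1, f (qinv (cdf μ) t) = ∫ x, f x ∂μ := by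
  rw [← integral_map (aemeasurable_qinv_cdf μ) (by rwa [map_qinv_cdf]), map_qinv_cdf]

theorem intervalIntegral_comp_qinv_cdf [IsProbabilityMeasure μ] {f : ℝ → ℝ}
    (hf : AEStronglyMeasurable f μ) (z : ℝ) :
    ∫ t in 0..cdf μ z, f (qinv (cdf μ) t) = ∫ x in Iic z, f x ∂μ := by
  rw [← integral_indicator measurableSet_Iic,
    ← integral_comp_qinv_cdf μ (hf.indicator measurableSet_Iic),
    intervalIntegral.integral_of_le (cdf_nonneg μ z), integral_Ioc_eq_integral_Ioo,
    ← setIntegral_congr_set (Iic_inter_Ioo_zero_one_ae_eq (cdf_le_one μ z)),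
    ← Measure.restrict_restrict measurableSet_Iic, ← integral_indicator measurableSet_Iic]
  refine setIntegral_congr_fun measurableSet_Ioo fun t ht => ?_
  simp only [indicator, mem_Iic, qinv_cdf_le_iff μ ht]

theorem Ioo_subset_range_cdf (hμ : Continuous (cdf μ)) : Ioo 0 1 ⊆ range (cdf μ) := fun _ ht =>
  mem_range_of_exists_le_of_exists_ge hμ
    ((tendsto_cdf_atBot μ).eventually (eventually_le_nhds ht.1)).exists
    ((tendsto_cdf_atTop μ).eventually (eventually_ge_nhds ht.2)).exists

end Quantile

theorem IsCopula.nonneg {C : ℝ → ℝ → ℝ} (hC : IsCopula C) {u v : ℝ} (hu : u ∈ Icc (0:ℝ) 1)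
    (hv : v ∈ Icc (0:ℝ) 1) : 0 ≤ C u v := by
  have h01 : (0:ℝ) ∈ Icc (0:ℝ) 1 := ⟨le_rfl, zero_le_one⟩
  have hrect := hC.2.2 0 u 0 v h01 hu h01 hv hu.1 hv.1
  linarith [(hC.1 u hu).1, (hC.2.1 v hv).1, (hC.2.1 0 h01).1]

section DefaultIntegral

variable {Ω : Type*} [MeasurableSpace Ω] {P : Measure Ω}

theorem distFun_mem_Icc [IsProbabilityMeasure P] (X : Ω → ℝ) (x : ℝ) :
    distFun P X x ∈ Icc (0:ℝ) 1 :=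
  ⟨measureReal_nonneg, measureReal_le_one⟩

theorem distFun_eq_cdf_map [IsProbabilityMeasure P] {X : Ω → ℝ} (hX : AEMeasurable X P) :
    distFun P X = cdf (P.map X) := by
  have := Measure.isProbabilityMeasure_map hX
  ext x
  rw [cdf_eq_real, measureReal_def, Measure.map_apply_of_aemeasurable hX measurableSet_Iic]
  rfl

theorem distFun_zero_of_mem_zero_one [IsProbabilityMeasure P] {D : Ω → ℝ} (hD : Measurable D)
    (hvals : ∀ ω, D ω = 0 ∨ D ω = 1) : distFun P D 0 = 1 - P.real {ω | D ω = 1} := by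
  have hcompl : {ω | D ω ≤ 0} = {ω | D ω = 1}ᶜ := by
    ext ω
    rcases hvals ω with h | h <;> simp [h]
  have hD1 : MeasurableSet {ω | D ω = 1} := hD (measurableSet_singleton 1)
  rw [← probReal_compl_eq_one_sub hD1, ← hcompl]
  rfl

theorem measureReal_inter_preimage_eq_setIntegral {A : Set Ω} {Z : Ω → ℝ} {p : ℝ → ℝ}
    (hp : ∀ z, 0 ≤ p z) {B : Set ℝ}
    (h : P (A ∩ Z ⁻¹' B) = ENNReal.ofReal (∫ z in B, p z ∂(P.map Z))) :
    P.real (A ∩ Z ⁻¹' B) = ∫ z in B, p z ∂(P.map Z) := by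
  rw [measureReal_def, h, ENNReal.toReal_ofReal (integral_nonneg hp)]

theorem distFun_eq_copula_add_setIntegral [IsProbabilityMeasure P] {D Z : Ω → ℝ}
    (hD : Measurable D) (hZ : Measurable Z)
    (hvals : ∀ ω, D ω = 0 ∨ D ω = 1) {p : ℝ → ℝ} (hp : ∀ z, 0 ≤ p z)
    (hver : ∀ B : Set ℝ, MeasurableSet B →
      P ({ω | D ω = 1} ∩ Z ⁻¹' B) = ENNReal.ofReal (∫ z in B, p z ∂(P.map Z)))
    {C : ℝ → ℝ → ℝ} (hC : IsCopula C)
    (hcop : ∀ x z : ℝ, P ({ω | D ω ≤ x} ∩ {ω | Z ω ≤ z})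
      = ENNReal.ofReal (C (distFun P D x) (distFun P Z z))) (z : ℝ) :
    distFun P Z z = C (distFun P D 0) (distFun P Z z) + ∫ x in Iic z, p x ∂(P.map Z) := by
  have hsplit : {ω | Z ω ≤ z} =
      ({ω | D ω ≤ 0} ∩ {ω | Z ω ≤ z}) ∪ ({ω | D ω = 1} ∩ Z ⁻¹' Iic z) := by
    ext ω
    rcases hvals ω with h | h <;> simp [h]
  have hdisj : Disjoint ({ω | D ω ≤ 0} ∩ {ω | Z ω ≤ z}) ({ω | D ω = 1} ∩ Z ⁻¹' Iic z) :=
    disjoint_left.2 fun ω h₀ h₁ => by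
      have hD0 : D ω ≤ 0 := h₀.1
      have hD1 : D ω = 1 := h₁.1
      linarith
  calc distFun P Z z = P.real {ω | Z ω ≤ z} := rfl
    _ = P.real (({ω | D ω ≤ 0} ∩ {ω | Z ω ≤ z}) ∪ ({ω | D ω = 1} ∩ Z ⁻¹' Iic z)) := by
      rw [← hsplit]
    _ = P.real ({ω | D ω ≤ 0} ∩ {ω | Z ω ≤ z}) + P.real ({ω | D ω = 1} ∩ Z ⁻¹' Iic z) :=
      measureReal_union hdisj ((hD (measurableSet_singleton 1)).inter (hZ measurableSet_Iic))
    _ = _ := by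
      rw [measureReal_def, hcop 0 z,
        ENNReal.toReal_ofReal (hC.nonneg (distFun_mem_Icc D 0) (distFun_mem_Icc Z z)),
        measureReal_inter_preimage_eq_setIntegral hp (hver _ measurableSet_Iic)]

theorem defaultIntegral_distFun [IsProbabilityMeasure P] {Z : Ω → ℝ} (hZ : AEMeasurable Z P)
    {p : ℝ → ℝ} (hp : AEStronglyMeasurable p (P.map Z)) (z : ℝ) :
    defaultIntegral P Z p (distFun P Z z) = ∫ x in Iic z, p x ∂(P.map Z) := by
  have := Measure.isProbabilityMeasure_map hZ
  rw [defaultIntegral, distFun_eq_cdf_map hZ]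
  exact intervalIntegral_comp_qinv_cdf _ hp z

theorem defaultIntegral_one [IsProbabilityMeasure P] {Z : Ω → ℝ} (hZ : AEMeasurable Z P)
    {p : ℝ → ℝ} (hp : AEStronglyMeasurable p (P.map Z)) :
    defaultIntegral P Z p 1 = ∫ x, p x ∂(P.map Z) := by
  have := Measure.isProbabilityMeasure_map hZ
  rw [defaultIntegral, distFun_eq_cdf_map hZ, intervalIntegral.integral_of_le zero_le_one,
    integral_Ioc_eq_integral_Ioo]
  exact integral_comp_qinv_cdf _ hp

end DefaultIntegral

theorem stmt14_general {Ω : Type*} [MeasurableSpace Ω] (P : MeasureTheory.Measure Ω)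
    [MeasureTheory.IsProbabilityMeasure P]
    (D Z : Ω → ℝ) (hD : Measurable D) (hZ : Measurable Z)
    (hvals : ∀ ω, D ω = 0 ∨ D ω = 1)
    (π : ℝ) (hπ : π ∈ Set.Ioo (0:ℝ) 1)
    (hprob : P {ω | D ω = 1} = ENNReal.ofReal π)
    (hFcont : Continuous (distFun P Z))
    (p : ℝ → ℝ) (hp : Measurable p) (hpmem : ∀ z, p z ∈ Set.Icc (0:ℝ) 1)
    (hver : ∀ B : Set ℝ, MeasurableSet B →
      P ({ω | D ω = 1} ∩ Z ⁻¹' B) = ENNReal.ofReal (∫ z in B, p z ∂(P.map Z)))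
    (C : ℝ → ℝ → ℝ) (hC : IsCopula C)
    (hcop : ∀ x z : ℝ, P ({ω | D ω ≤ x} ∩ {ω | Z ω ≤ z})
      = ENNReal.ofReal (C (distFun P D x) (distFun P Z z))) :
    ∀ t ∈ Set.Icc (0:ℝ) 1, defaultIntegral P Z p t = t - C (1 - π) t := by
  have hpnn : ∀ z, 0 ≤ p z := fun z => (hpmem z).1
  have hπD : P.real {ω | D ω = 1} = π := by
    rw [measureReal_def, hprob, ENNReal.toReal_ofReal hπ.1.le]
  have hπ' : 1 - π ∈ Icc (0:ℝ) 1 := ⟨by linarith [hπ.2], by linarith [hπ.1]⟩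
  have hF := distFun_eq_cdf_map (P := P) hZ.aemeasurable
  intro t ht
  obtain rfl | h0 := ht.1.eq_or_lt
  · simp [defaultIntegral, (hC.1 _ hπ').1]
  obtain rfl | h1 := ht.2.eq_or_lt
  · have hmass : ∫ x, p x ∂(P.map Z) = π := by
      simpa [hπD] using (measureReal_inter_preimage_eq_setIntegral hpnn (hver _ .univ)).symm
    rw [defaultIntegral_one hZ.aemeasurable hp.aestronglyMeasurable, hmass, (hC.1 _ hπ').2]
    ring
  obtain ⟨z, rfl⟩ := Ioo_subset_range_cdf _ (hF ▸ hFcont) ⟨h0, h1⟩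
  have hsplit := distFun_eq_copula_add_setIntegral hD hZ hvals hpnn hver hC hcop z
  rw [distFun_zero_of_mem_zero_one hD hvals, hπD] at hsplit
  rw [← hF, defaultIntegral_distFun hZ.aemeasurable hp.aestronglyMeasurable]
  linarith

/-- if `D ∈ {0,1}` with `P(D = 1) = π ∈ (0,1)`, `Z` has a continuous
distribution function and `C` is a copula of `(D, Z)`, then the default integral function
satisfies `G_{D,Z}(t) = t − C(1 − π, t)` for all `t ∈ [0,1]`. -/
theorem stmt14 {Ω : Type*} [MeasurableSpace Ω] (P : MeasureTheory.Measure Ω)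
    [MeasureTheory.IsProbabilityMeasure P] (hP : MeasureAtomless P)
    (D Z : Ω → ℝ) (hD : Measurable D) (hZ : Measurable Z)
    (hvals : ∀ ω, D ω = 0 ∨ D ω = 1)
    (π : ℝ) (hπ : π ∈ Set.Ioo (0:ℝ) 1)
    (hprob : P {ω | D ω = 1} = ENNReal.ofReal π)
    (hFcont : Continuous (distFun P Z))
    (p : ℝ → ℝ) (hp : Measurable p) (hpmem : ∀ z, p z ∈ Set.Icc (0:ℝ) 1)
    (hver : ∀ B : Set ℝ, MeasurableSet B →
      P ({ω | D ω = 1} ∩ Z ⁻¹' B) = ENNReal.ofReal (∫ z in B, p z ∂(P.map Z)))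
    (C : ℝ → ℝ → ℝ) (hC : IsCopula C)
    (hcop : ∀ x z : ℝ, P ({ω | D ω ≤ x} ∩ {ω | Z ω ≤ z})
      = ENNReal.ofReal (C (distFun P D x) (distFun P Z z))) :
    ∀ t ∈ Set.Icc (0:ℝ) 1, defaultIntegral P Z p t = t - C (1 - π) t :=
  stmt14_general P D Z hD hZ hvals π hπ hprob hFcont p hp hpmem hver C hC hcop
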